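/- Let 1 ≤ i ≤ s, write ξ_i = (k,t), and let p > k be such that the elements of M in column t are exactly {(j,t) : p ≤ j ≤ n}. For (a,k) ∈ B_i^{(3)} (i.e. p ≤ a ≤ n) set ỹ_{ak} = (y_{ak}y_{kt} + Σ_{(j,t)∈B_{i−1}} y_{aj}y_{jt})·y_{kt}^{−1}, and for (b,c) ∈ B_i^{(1.1)} set ỹ_{bc} = (y_{bc}y_{kt} − y_{bt}y_{kc})·y_{kt}^{−1}. Then in the localized Poisson algebra S(ℒ_{i−1})_{y_{kt}} one has {ỹ_{ak}, ỹ_{bc}} = 0 mod 𝔪. -/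

import Mathlib

open Finset MvPolynomial

namespace Panov

/-- The set `A` of places `(i,j)` with `n ≥ i > j ≥ 1`. -/
def placesA (n : ℕ) : Finset (ℕ × ℕ) :=
  (Finset.range (n + 1) ×ˢ Finset.range (n + 1)).filter fun p => 1 ≤ p.2 ∧ p.2 < p.1

/-- The rank of a place in the linear order `≻`:
`η ≻ ζ` iff `ordA n η < ordA n ζ`. -/
def ordA (n : ℕ) (p : ℕ × ℕ) : ℕ := p.2 * (n + 1) + (n - p.1)

/-- The `≻`-greatest element of a (nonempty) set `B` of places:
the element with the minimal value of `ordA`. -/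
def xiOf (n : ℕ) (B : Finset (ℕ × ℕ)) : ℕ × ℕ :=
  let m := WithTop.untopD 0 ((B.image (ordA n)).min)
  (n - m % (n + 1), m / (n + 1))

/-- The places that get the symbol `−` at the current step, when the
current set of unfilled places is `B`. -/
def minusSet (n : ℕ) (B : Finset (ℕ × ℕ)) : Finset (ℕ × ℕ) :=
  B.filter fun p =>
    p.1 = (xiOf n B).1 ∧ (xiOf n B).2 < p.2 ∧ p.2 < (xiOf n B).1 ∧ (p.2, (xiOf n B).2) ∈ B

/-- The places that get the symbol `+` at the current step. -/
def plusSet (n : ℕ) (B : Finset (ℕ × ℕ)) : Finset (ℕ × ℕ) :=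
  B.filter fun p =>
    p.2 = (xiOf n B).2 ∧ (xiOf n B).2 < p.1 ∧ p.1 < (xiOf n B).1 ∧ ((xiOf n B).1, p.1) ∈ B

/-- `Bset n M i` is the set of places unfilled after step `i` of the diagram. -/
def Bset (n : ℕ) (M : Finset (ℕ × ℕ)) : ℕ → Finset (ℕ × ℕ)
  | 0 => placesA n \ M
  | i + 1 =>
      Bset n M i \
        insert (xiOf n (Bset n M i)) (minusSet n (Bset n M i) ∪ plusSet n (Bset n M i))

/-- `ξ_i`, the place that receives `⊗` at step `i ≥ 1`. -/
def xiStep (n : ℕ) (M : Finset (ℕ × ℕ)) (i : ℕ) : ℕ × ℕ := xiOf n (Bset n M (i - 1))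

/-- `C_i⁻`, the places filled with `−` at step `i ≥ 1`. -/
def Cminus (n : ℕ) (M : Finset (ℕ × ℕ)) (i : ℕ) : Finset (ℕ × ℕ) :=
  minusSet n (Bset n M (i - 1))

/-- `C_i⁺`, the places filled with `+` at step `i ≥ 1`. -/
def Cplus (n : ℕ) (M : Finset (ℕ × ℕ)) (i : ℕ) : Finset (ℕ × ℕ) :=
  plusSet n (Bset n M (i - 1))

/-- `M ⊆ A` spans an ideal `𝔪` of `𝔫 = ut(n,K)`. -/
def IsIdealSet (n : ℕ) (M : Finset (ℕ × ℕ)) : Prop :=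
  M ⊆ placesA n ∧
    (∀ p ∈ M, ∀ d, 1 ≤ d → d < p.2 → (p.1, d) ∈ M) ∧
    (∀ p ∈ M, ∀ c, p.1 < c → c ≤ n → (c, p.2) ∈ M)

/-- `s` is the number of steps after which the diagram is complete. -/
def IsNumSteps (n : ℕ) (M : Finset (ℕ × ℕ)) (s : ℕ) : Prop :=
  Bset n M s = ∅ ∧ ∀ j < s, (Bset n M j).Nonempty


/-- The places indexing the coordinates on `ℒ* `, i.e. `A ∖ M`. -/
def B0 (n : ℕ) (M : Finset (ℕ × ℕ)) : Finset (ℕ × ℕ) := placesA n \ M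

/-- The type of places indexing the coordinates `y_η` on `ℒ*`. -/
abbrev Pl (n : ℕ) (M : Finset (ℕ × ℕ)) : Type := {p : ℕ × ℕ // p ∈ B0 n M}

/-- `K[ℒ*] = S(ℒ)`, the polynomial algebra in the variables
`{y_η : η ∈ A ∖ M}`. -/
abbrev PolyL (K : Type) [Field K] (n : ℕ) (M : Finset (ℕ × ℕ)) : Type :=
  MvPolynomial (Pl n M) K

/-- The structure constants of the Poisson bracket on `K[ℒ*]`:
`{y_η, y_ζ} = [y_η, y_ζ] mod 𝔪`, where for `η = (a,b)`, `ζ = (c,d)` one has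
`[e_{ab}, e_{cd}] = δ_{bc} e_{ad} − δ_{da} e_{cb}` and the variables from `M`
are set to `0`. -/
noncomputable def structConst (K : Type) [Field K] (n : ℕ) (M : Finset (ℕ × ℕ))
    (η ζ : Pl n M) : PolyL K n M :=
  (if h : η.1.2 = ζ.1.1 ∧ (η.1.1, ζ.1.2) ∈ B0 n M then X ⟨(η.1.1, ζ.1.2), h.2⟩ else 0)
    - (if h : ζ.1.2 = η.1.1 ∧ (ζ.1.1, η.1.2) ∈ B0 n M then X ⟨(ζ.1.1, η.1.2), h.2⟩ else 0)

/-- The Poisson bracket on `K[ℒ*]`, extending `{y_η, y_ζ} = [y_η, y_ζ] mod 𝔪`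
as a biderivation:  `{P,Q} = ∑_{η,ζ} ∂P/∂y_η · ∂Q/∂y_ζ · {y_η, y_ζ}`. -/
noncomputable def pb (K : Type) [Field K] (n : ℕ) (M : Finset (ℕ × ℕ))
    (P Q : PolyL K n M) : PolyL K n M :=
  ∑ η : Pl n M, ∑ ζ : Pl n M,
    pderiv η P * pderiv ζ Q * structConst K n M η ζ

/-- A Poisson bracket on a commutative `K`-algebra `A`: a skew-symmetric
`K`-bilinear bracket satisfying the Leibniz rule and the Jacobi identity. -/
structure PoissonStr (K : Type) [Field K] (A : Type*) [CommRing A] [Algebra K A] where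
  br : A → A → A
  add_left : ∀ a b c, br (a + b) c = br a c + br b c
  smul_left : ∀ (k : K) (a b : A), br (k • a) b = k • br a b
  skew : ∀ a b, br a b = -br b a
  leibniz : ∀ a b c, br a (b * c) = br a b * c + b * br a c
  jacobi : ∀ a b c, br a (br b c) = br (br a b) c + br b (br a c)

/-- The localization `S(ℒ_{i−1})_z` (and of any `S(ℒ_j)`) realized inside the
localization of `K[ℒ*]` away from the variable `z = y_v`. -/
abbrev LocAway (K : Type) [Field K] (n : ℕ) (M : Finset (ℕ × ℕ)) (v : Pl n M) : Type :=
  Localization.Away (X v : PolyL K n M)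

/-- The image of the coordinate `y_q` in the localization; it is interpreted
as `0` when `q ∈ M` (i.e. everything is taken mod `𝔪`). -/
noncomputable def Xloc (K : Type) [Field K] (n : ℕ) (M : Finset (ℕ × ℕ))
    (v : Pl n M) (q : ℕ × ℕ) : LocAway K n M v :=
  if h : q ∈ B0 n M then
    algebraMap (PolyL K n M) (LocAway K n M v) (X (⟨q, h⟩ : Pl n M))
  else 0

/-- The inverse `z^{−1} = y_{kt}^{−1}` in the localization. -/
noncomputable def invZ (K : Type) [Field K] (n : ℕ) (M : Finset (ℕ × ℕ))
    (v : Pl n M) : LocAway K n M v :=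
  IsLocalization.Away.invSelf (X v : PolyL K n M)

/-- The subset `B_i^{(1.1)}` of `B_i` (relative to `ξ_i = (k,t)`). -/
def B11set (n : ℕ) (M : Finset (ℕ × ℕ)) (i k t : ℕ) : Finset (ℕ × ℕ) :=
  (Bset n M i).filter fun q =>
    1 < q.1 ∧ q.1 < k ∧ t < q.2 ∧ q.2 < k ∧
      (q.1, t) ∈ Bset n M (i - 1) ∧ (k, q.2) ∈ Bset n M (i - 1)

/-- The elements `ỹ_{ab}` of the localization `S(ℒ_{i−1})_z`, `z = y_{kt}`,
given by the formulas (4)–(6) of the paper: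
* `ỹ_{ab} = (y_{ab}y_{kt} − y_{at}y_{kb})·y_{kt}^{−1}` for `(a,b) ∈ B_i^{(1.1)}`;
* `ỹ_{ak} = (y_{ak}y_{kt} + ∑_{(j,t) ∈ B_{i−1}, j ≠ k} y_{aj}y_{jt})·y_{kt}^{−1}`
  for `(a,k) ∈ B_i^{(3)}` (i.e. `p ≤ a ≤ n`);
* `ỹ_{ab} = y_{ab}` for all remaining `(a,b) ∈ B_i`;
and `ỹ_{ab} = 0` for `(a,b) ∈ M` (everything is mod `𝔪`). -/
noncomputable def ytilde (K : Type) [Field K] (n : ℕ) (M : Finset (ℕ × ℕ))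
    (i k t p : ℕ) (hmem : (k, t) ∈ B0 n M) (q : ℕ × ℕ) :
    LocAway K n M ⟨(k, t), hmem⟩ :=
  if q ∈ B11set n M i k t then
    (Xloc K n M ⟨(k, t), hmem⟩ q * Xloc K n M ⟨(k, t), hmem⟩ (k, t)
      - Xloc K n M ⟨(k, t), hmem⟩ (q.1, t) * Xloc K n M ⟨(k, t), hmem⟩ (k, q.2))
      * invZ K n M ⟨(k, t), hmem⟩
  else if q.2 = k ∧ p ≤ q.1 ∧ q ∈ Bset n M i then
    (Xloc K n M ⟨(k, t), hmem⟩ q * Xloc K n M ⟨(k, t), hmem⟩ (k, t)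
      + ∑ j ∈ Finset.range (n + 1),
          if (j, t) ∈ Bset n M (i - 1) ∧ j ≠ k then
            Xloc K n M ⟨(k, t), hmem⟩ (q.1, j) * Xloc K n M ⟨(k, t), hmem⟩ (j, t)
          else 0)
      * invZ K n M ⟨(k, t), hmem⟩
  else if q ∈ Bset n M i then Xloc K n M ⟨(k, t), hmem⟩ q
  else 0

/-!
`ỹ_{ak}` and `ỹ_{bc}` are `P z⁻¹` and `Q z⁻¹` with `z = y_{kt}` and polynomials `P`, `Q`, and in
any Poisson algebra `{P z⁻¹, Q z⁻¹} = 0` once `P`, `Q` and `z` pairwise Poisson-commute. The three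
polynomial identities follow from `{y_q, y_r} = [e_q, e_r] mod 𝔪`: `{P, z} = 0` needs
`y_{at} ∈ 𝔪` (as `p ≤ a`), and in `{P, Q}` the term `{y_{ak}, y_{kc}} = y_{ac}` is cancelled by
`{y_{ab}, y_{bc}} = y_{ac}` from the summand `j = b` of `P`, while the summand `j = c` cancels on
its own.
-/

namespace PoissonStr

variable {K : Type} [Field K] {A : Type*} [CommRing A] [Algebra K A] (β : PoissonStr K A)

lemma br_one (u : A) : β.br u 1 = 0 := by
  have h := β.leibniz u 1 1
  rw [mul_one] at h
  linear_combination -h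

lemma br_eq_zero_of_mul_eq_one {u z w : A} (hzw : z * w = 1) (h : β.br u z = 0) :
    β.br u w = 0 := by
  have h' := β.leibniz u z w
  rw [hzw, br_one, h, zero_mul, zero_add] at h'
  linear_combination (-w) * h' - β.br u w * hzw

lemma br_mul_mul_eq_zero_of_mul_eq_one {f g z w : A} (hzw : z * w = 1)
    (hfz : β.br f z = 0) (hgz : β.br g z = 0) (hzz : β.br z z = 0) (hfg : β.br f g = 0) :
    β.br (f * w) (g * w) = 0 := by
  have hfw := β.br_eq_zero_of_mul_eq_one hzw hfz
  have hgw := β.br_eq_zero_of_mul_eq_one hzw hgz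
  have hww : β.br w w = 0 := by
    refine β.br_eq_zero_of_mul_eq_one hzw ?_
    rw [β.skew, β.br_eq_zero_of_mul_eq_one hzw hzz, neg_zero]
  have hgf : β.br g f = 0 := by rw [β.skew, hfg, neg_zero]
  have hwf : β.br w f = 0 := by rw [β.skew, hfw, neg_zero]
  rw [β.leibniz, β.skew (f * w) g, β.skew (f * w) w, β.leibniz, β.leibniz, hgf, hgw, hwf, hww]
  ring

end PoissonStr

section Bracket

variable {K : Type} [Field K] {n : ℕ} {M : Finset (ℕ × ℕ)}

lemma pb_add_left (P Q R : PolyL K n M) :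
    pb K n M (P + Q) R = pb K n M P R + pb K n M Q R := by
  simp [pb, add_mul, Finset.sum_add_distrib]

lemma pb_sub_left (P Q R : PolyL K n M) :
    pb K n M (P - Q) R = pb K n M P R - pb K n M Q R := by
  simp [pb, sub_mul, Finset.sum_sub_distrib]

lemma pb_sub_right (P Q R : PolyL K n M) :
    pb K n M P (Q - R) = pb K n M P Q - pb K n M P R := by
  simp [pb, mul_sub, sub_mul, Finset.sum_sub_distrib]

lemma pb_sum_left {ι : Type*} (s : Finset ι) (f : ι → PolyL K n M) (R : PolyL K n M) :
    pb K n M (∑ j ∈ s, f j) R = ∑ j ∈ s, pb K n M (f j) R := by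
  simp only [pb, map_sum, Finset.sum_mul]
  exact (Finset.sum_comm.trans (Finset.sum_congr rfl fun _ _ => Finset.sum_comm)).symm

lemma pb_mul_left (P Q R : PolyL K n M) :
    pb K n M (P * Q) R = pb K n M P R * Q + P * pb K n M Q R := by
  simp only [pb, pderiv_mul, Finset.sum_mul, Finset.mul_sum, ← Finset.sum_add_distrib]
  exact Finset.sum_congr rfl fun _ _ => Finset.sum_congr rfl fun _ _ => by ring

lemma pb_mul_right (P Q R : PolyL K n M) :
    pb K n M P (Q * R) = pb K n M P Q * R + Q * pb K n M P R := by
  simp only [pb, pderiv_mul, Finset.sum_mul, Finset.mul_sum, ← Finset.sum_add_distrib]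
  exact Finset.sum_congr rfl fun _ _ => Finset.sum_congr rfl fun _ _ => by ring

lemma pb_X_X (η ζ : Pl n M) : pb K n M (X η) (X ζ) = structConst K n M η ζ := by
  classical
  simp [pb, pderiv_X, Pi.single_apply]

end Bracket

lemma mem_placesA {n : ℕ} {q : ℕ × ℕ} : q ∈ placesA n ↔ q.1 ≤ n ∧ 1 ≤ q.2 ∧ q.2 < q.1 := by
  simp only [placesA, Finset.mem_filter, Finset.mem_product, Finset.mem_range]
  omega

lemma Bset_subset_B0 {n : ℕ} {M : Finset (ℕ × ℕ)} (j : ℕ) : Bset n M j ⊆ B0 n M := by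
  induction j with
  | zero => exact subset_rfl
  | succ j ih => exact Finset.sdiff_subset.trans ih

namespace IsIdealSet

variable {n : ℕ} {M : Finset (ℕ × ℕ)} {q r : ℕ × ℕ}

lemma comp_mem_of_left_mem (hM : IsIdealSet n M) (hq : q ∈ M) (hr : r ∈ placesA n)
    (h : q.2 = r.1) : (q.1, r.2) ∈ M := by
  rw [mem_placesA] at hr
  exact hM.2.1 q hq r.2 hr.2.1 (by omega)

lemma comp_mem_of_right_mem (hM : IsIdealSet n M) (hq : q ∈ placesA n) (hr : r ∈ M)
    (h : q.2 = r.1) : (q.1, r.2) ∈ M := by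
  rw [mem_placesA] at hq
  exact hM.2.2 r hr q.1 (by omega) hq.1

end IsIdealSet

noncomputable def coord (K : Type) [Field K] (n : ℕ) (M : Finset (ℕ × ℕ)) (q : ℕ × ℕ) :
    PolyL K n M :=
  if h : q ∈ B0 n M then X ⟨q, h⟩ else 0

section Coord

variable {K : Type} [Field K] {n : ℕ} {M : Finset (ℕ × ℕ)}

lemma coord_eq_zero_of_mem {q : ℕ × ℕ} (hq : q ∈ M) : coord K n M q = 0 :=
  dif_neg fun h => (Finset.mem_sdiff.mp h).2 hq

lemma algebraMap_coord (v : Pl n M) (q : ℕ × ℕ) :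
    algebraMap (PolyL K n M) (LocAway K n M v) (coord K n M q) = Xloc K n M v q := by
  unfold Xloc coord
  split <;> simp

/-- `[e_q, e_r] = e_q e_r - e_r e_q` for matrix units; since `𝔪` is an ideal, the formula stays
true mod `𝔪` when `q` or `r` lies in `M`. -/
lemma pb_coord_coord (hM : IsIdealSet n M) {q r : ℕ × ℕ} (hq : q ∈ placesA n)
    (hr : r ∈ placesA n) :
    pb K n M (coord K n M q) (coord K n M r) =
      (if q.2 = r.1 then coord K n M (q.1, r.2) else 0)
        - (if r.2 = q.1 then coord K n M (r.1, q.2) else 0) := by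
  by_cases hq0 : q ∈ B0 n M
  · by_cases hr0 : r ∈ B0 n M
    · rw [coord, coord, dif_pos hq0, dif_pos hr0, pb_X_X, structConst]
      dsimp only
      congr 1 <;> split_ifs <;> simp_all [coord]
    · have hrM : r ∈ M := by simpa [B0, hr] using hr0
      rw [coord_eq_zero_of_mem hrM,
        ite_eq_right_iff.mpr fun h => coord_eq_zero_of_mem (hM.comp_mem_of_right_mem hq hrM h),
        ite_eq_right_iff.mpr fun h => coord_eq_zero_of_mem (hM.comp_mem_of_left_mem hrM hq h)]
      simp [pb]
  · have hqM : q ∈ M := by simpa [B0, hq] using hq0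
    rw [coord_eq_zero_of_mem hqM,
      ite_eq_right_iff.mpr fun h => coord_eq_zero_of_mem (hM.comp_mem_of_left_mem hqM hr h),
      ite_eq_right_iff.mpr fun h => coord_eq_zero_of_mem (hM.comp_mem_of_right_mem hr hqM h)]
    simp [pb]

end Coord

/-- The numerator of `ỹ_{bc}` for `(b,c) ∈ B_i^{(1.1)}`, with `ξ_i = (k,t)`. -/
noncomputable def ytildeNum11 (K : Type) [Field K] (n : ℕ) (M : Finset (ℕ × ℕ))
    (k t b c : ℕ) : PolyL K n M :=
  coord K n M (b, c) * coord K n M (k, t) - coord K n M (b, t) * coord K n M (k, c)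

/-- The numerator of `ỹ_{ak}` for `(a,k) ∈ B_i^{(3)}`, with `S = {j ≠ k : (j,t) ∈ B_{i−1}}`. -/
noncomputable def ytildeNum3 (K : Type) [Field K] (n : ℕ) (M : Finset (ℕ × ℕ))
    (k t a : ℕ) (S : Finset ℕ) : PolyL K n M :=
  coord K n M (a, k) * coord K n M (k, t) + ∑ j ∈ S, coord K n M (a, j) * coord K n M (j, t)

section Numerators

variable {K : Type} [Field K] {n : ℕ} {M : Finset (ℕ × ℕ)} {a b c k t : ℕ} {S : Finset ℕ}

local notation "𝐲" => coord K n M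

lemma pb_ytildeNum11_coord (hM : IsIdealSet n M) (ht : 1 ≤ t) (htc : t < c) (hcb : c < b)
    (hbk : b < k) (hkn : k ≤ n) : pb K n M (ytildeNum11 K n M k t b c) (𝐲 (k, t)) = 0 := by
  simp (disch := (try simp only [mem_placesA]); omega) only
    [ytildeNum11, pb_sub_left, pb_mul_left, pb_coord_coord hM, if_neg]
  ring

lemma pb_ytildeNum3_coord (hM : IsIdealSet n M) (ht : 1 ≤ t)
    (hS : ∀ j ∈ S, t < j ∧ j < a ∧ j ≠ k) (hat : (a, t) ∈ M) (htk : t < k) (hka : k < a)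
    (han : a ≤ n) : pb K n M (ytildeNum3 K n M k t a S) (𝐲 (k, t)) = 0 := by
  rw [ytildeNum3, pb_add_left, pb_sum_left, Finset.sum_eq_zero fun j hj => ?_]
  · simp (disch := (try simp only [mem_placesA]); omega) only
      [pb_mul_left, pb_coord_coord hM, if_neg, ↓reduceIte, coord_eq_zero_of_mem hat]
    ring
  · obtain ⟨htj, hja, hjk⟩ := hS j hj
    simp (disch := (try simp only [mem_placesA]); omega) only
      [pb_mul_left, pb_coord_coord hM, if_neg]
    ring

lemma pb_ytildeNum3_ytildeNum11 (hM : IsIdealSet n M) (ht : 1 ≤ t)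
    (hS : ∀ j ∈ S, t < j ∧ j < a ∧ j ≠ k) (hbS : b ∈ S) (hat : (a, t) ∈ M) (htc : t < c)
    (hcb : c < b) (hbk : b < k) (hka : k < a) (han : a ≤ n) :
    pb K n M (ytildeNum3 K n M k t a S) (ytildeNum11 K n M k t b c) = 0 := by
  have hterm : ∀ j ∈ S, pb K n M (𝐲 (a, j) * 𝐲 (j, t)) (ytildeNum11 K n M k t b c) =
      if j = b then 𝐲 (a, c) * 𝐲 (b, t) * 𝐲 (k, t) else 0 := by
    intro j hj
    obtain ⟨htj, hja, hjk⟩ := hS j hj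
    simp (disch := (try simp only [mem_placesA]); omega) only
      [ytildeNum11, pb_sub_right, pb_mul_left, pb_mul_right, pb_coord_coord hM, if_neg,
        coord_eq_zero_of_mem hat]
    split_ifs <;> subst_vars <;> ring
  rw [ytildeNum3, pb_add_left, pb_sum_left, Finset.sum_congr rfl hterm, Finset.sum_ite_eq' S b,
    if_pos hbS, ytildeNum11]
  simp (disch := (try simp only [mem_placesA]); omega) only
    [pb_sub_right, pb_mul_left, pb_mul_right, pb_coord_coord hM, if_neg, ↓reduceIte,
      coord_eq_zero_of_mem hat]
  ring

end Numerators

lemma lt_of_mem_Bset_of_column {n : ℕ} {M : Finset (ℕ × ℕ)} {t p j m : ℕ}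
    (hMp : ∀ j, (j, t) ∈ M ↔ p ≤ j ∧ j ≤ n) (hj : (j, t) ∈ Bset n M m) : t < j ∧ j < p := by
  obtain ⟨hA, hnM⟩ := Finset.mem_sdiff.mp (Bset_subset_B0 m hj)
  have hA := mem_placesA.mp hA
  have := (hMp j).not.mp hnM
  omega

section Ytilde

variable {K : Type} [Field K] {n : ℕ} {M : Finset (ℕ × ℕ)} {i k t p : ℕ}

lemma algebraMap_coord_mul_invZ {q : ℕ × ℕ} (hq : q ∈ B0 n M) :
    algebraMap _ (LocAway K n M ⟨q, hq⟩) (coord K n M q) * invZ K n M ⟨q, hq⟩ = 1 := by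
  rw [coord, dif_pos hq]
  exact IsLocalization.Away.mul_invSelf _

variable (hmem : (k, t) ∈ B0 n M)

lemma ytilde_eq_of_mem_B11set {b c : ℕ} (hbc : (b, c) ∈ B11set n M i k t) :
    ytilde K n M i k t p hmem (b, c) =
      algebraMap _ _ (ytildeNum11 K n M k t b c) * invZ K n M ⟨(k, t), hmem⟩ := by
  rw [ytilde, if_pos hbc, ytildeNum11]
  simp only [map_sub, map_mul, algebraMap_coord]

lemma ytilde_eq_of_le {a : ℕ} (hpa : p ≤ a) (hak : (a, k) ∈ Bset n M i) :
    ytilde K n M i k t p hmem (a, k) =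
      algebraMap _ _ (ytildeNum3 K n M k t a
        ((range (n + 1)).filter fun j => (j, t) ∈ Bset n M (i - 1) ∧ j ≠ k)) *
        invZ K n M ⟨(k, t), hmem⟩ := by
  have hak11 : (a, k) ∉ B11set n M i k t := fun h => (Finset.mem_filter.mp h).2.2.2.2.1.false
  rw [ytilde, if_neg hak11, if_pos ⟨rfl, hpa, hak⟩, ytildeNum3, Finset.sum_filter]
  simp only [map_add, map_mul, map_sum, apply_ite, map_zero, algebraMap_coord]

end Ytilde

theorem case3_bracket_vanishes_general (K : Type) [Field K]
    (n : ℕ) (M : Finset (ℕ × ℕ))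
    (hM : IsIdealSet n M)
    (i k t p : ℕ)
    (hmem : (k, t) ∈ B0 n M)
    (hMp : ∀ j, (j, t) ∈ M ↔ p ≤ j ∧ j ≤ n) :
    ∀ β : PoissonStr K (LocAway K n M ⟨(k, t), hmem⟩),
      (∀ P Q : PolyL K n M,
        β.br (algebraMap _ _ P) (algebraMap _ _ Q) =
          algebraMap _ _ (pb K n M P Q)) →
      ∀ a b c : ℕ, p ≤ a → a ≤ n → (a, k) ∈ Bset n M i →
        (b, c) ∈ B11set n M i k t →
        β.br (ytilde K n M i k t p hmem (a, k)) (ytilde K n M i k t p hmem (b, c)) = 0 := by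
  intro β hβ a b c hpa han hak hbc
  obtain ⟨hbcB, -, hbk, htc, -, hbt, -⟩ := Finset.mem_filter.mp hbc
  have hktA := (Finset.mem_sdiff.mp hmem).1
  obtain ⟨hkn, ht, htk⟩ := mem_placesA.mp hktA
  have hka := (mem_placesA.mp (Finset.mem_sdiff.mp (Bset_subset_B0 i hak)).1).2.2
  have hcb := (mem_placesA.mp (Finset.mem_sdiff.mp (Bset_subset_B0 i hbcB)).1).2.2
  have hat : (a, t) ∈ M := (hMp a).mpr ⟨hpa, han⟩
  set S := (range (n + 1)).filter fun j => (j, t) ∈ Bset n M (i - 1) ∧ j ≠ k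
  have hS : ∀ j ∈ S, t < j ∧ j < a ∧ j ≠ k := fun j hj => by
    obtain ⟨-, hjB, hjk⟩ := Finset.mem_filter.mp hj
    obtain ⟨htj, hjp⟩ := lt_of_mem_Bset_of_column hMp hjB
    exact ⟨htj, by omega, hjk⟩
  have hbS : b ∈ S := Finset.mem_filter.mpr ⟨Finset.mem_range.mpr (by omega), hbt, hbk.ne⟩
  rw [ytilde_eq_of_le hmem hpa hak, ytilde_eq_of_mem_B11set hmem hbc]
  refine β.br_mul_mul_eq_zero_of_mul_eq_one (algebraMap_coord_mul_invZ hmem) ?_ ?_ ?_ ?_ <;>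
    rw [hβ]
  · rw [pb_ytildeNum3_coord hM ht hS hat htk hka han, map_zero]
  · rw [pb_ytildeNum11_coord hM ht htc hcb hbk hkn, map_zero]
  · rw [pb_coord_coord hM hktA hktA]
    simp [htk.ne]
  · rw [pb_ytildeNum3_ytildeNum11 hM ht hS hbS hat htc hcb hbk hka han, map_zero]

/-- **Case 3 of the proof of Theorem 1.**  Write `ξ_i = (k,t)`, and let `p > k`
be such that the elements of `M` in column `t` are exactly `{(j,t) : p ≤ j ≤ n}`.
For `(a,k) ∈ B_i^{(3)}` (i.e. `p ≤ a ≤ n`) let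
`ỹ_{ak} = (y_{ak}y_{kt} + ∑_{(j,t) ∈ B_{i−1}} y_{aj}y_{jt})·y_{kt}^{−1}`, and for
`(b,c) ∈ B_i^{(1.1)}` let `ỹ_{bc} = (y_{bc}y_{kt} − y_{bt}y_{kc})·y_{kt}^{−1}`.
Then in the localized Poisson algebra `S(ℒ_{i−1})_{y_{kt}}` one has
`{ỹ_{ak}, ỹ_{bc}} = 0 mod 𝔪`. -/
theorem case3_bracket_vanishes (K : Type) [Field K] [CharZero K]
    (n s : ℕ) (hn : 2 ≤ n) (M : Finset (ℕ × ℕ))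
    (hM : IsIdealSet n M) (hs : IsNumSteps n M s)
    (i k t p : ℕ) (hi1 : 1 ≤ i) (his : i ≤ s)
    (hkt : xiStep n M i = (k, t)) (hmem : (k, t) ∈ B0 n M)
    (hkp : k < p) (hMp : ∀ j, (j, t) ∈ M ↔ p ≤ j ∧ j ≤ n) :
    ∀ β : PoissonStr K (LocAway K n M ⟨(k, t), hmem⟩),
      (∀ P Q : PolyL K n M,
        β.br (algebraMap _ _ P) (algebraMap _ _ Q) =
          algebraMap _ _ (pb K n M P Q)) →
      ∀ a b c : ℕ, p ≤ a → a ≤ n → (a, k) ∈ Bset n M i →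
        (b, c) ∈ B11set n M i k t →
        β.br (ytilde K n M i k t p hmem (a, k)) (ytilde K n M i k t p hmem (b, c)) = 0 :=
  case3_bracket_vanishes_general K n M hM i k t p hmem hMp

end Panov
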